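/- Let h(t) = (1/2)(1−t)² log((1−t)²) + (1/2)(1+t)² log((1+t)²) − (1+t²) log(1+t²). Then for every t ∈ [0,1), h'(t) ≥ h(t) ≥ 0, where h'(t) = 2((1+t) log(1+t) − (1−t) log(1−t) − t log(1+t²)) is the derivative of h. -/

import Mathlib

/-- `h(t) = (1/2)(1−t)² log((1−t)²) + (1/2)(1+t)² log((1+t)²) − (1+t²) log(1+t²)`
(note `Real.log 0 = 0`). -/
noncomputable def hFun (t : ℝ) : ℝ :=
  (1 / 2) * (1 - t) ^ 2 * Real.log ((1 - t) ^ 2) +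
    (1 / 2) * (1 + t) ^ 2 * Real.log ((1 + t) ^ 2) -
    (1 + t ^ 2) * Real.log (1 + t ^ 2)

/-- The derivative of `h`:
`h'(t) = 2((1+t) log(1+t) − (1−t) log(1−t) − t log(1+t²))`. -/
noncomputable def hFun' (t : ℝ) : ℝ :=
  2 * ((1 + t) * Real.log (1 + t) - (1 - t) * Real.log (1 - t) -
    t * Real.log (1 + t ^ 2))

/-- The second derivative of `h`: `h''(t) = 4/(1+t²) − 2 log((1+t²)/(1−t²))`. -/
noncomputable def hFun'' (t : ℝ) : ℝ :=
  4 / (1 + t ^ 2) - 2 * Real.log ((1 + t ^ 2) / (1 - t ^ 2))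

/-! Since `h` is `½φ((1-t)²) + ½φ((1+t)²) - φ(1+t²)` with `φ x = x log x`, its derivative is `h'`,
which is nonnegative on `[0,1)` because `1 + t² ≤ 1 + t` there; with `h 0 = 0` this gives `h ≥ 0`.
For the other inequality, `h' - h` factors as `(1-t)` times
`(1+t) log(1+t) - (3-t) log(1-t) + (1-t) log(1+t²)`, a sum of three nonnegative terms. -/

open Real

lemma hFun_eq_mul_log (t : ℝ) :
    hFun t = (1 - t) ^ 2 * log (1 - t) + (1 + t) ^ 2 * log (1 + t)
      - (1 + t ^ 2) * log (1 + t ^ 2) := by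
  simp only [hFun, log_pow]
  push_cast
  ring

lemma hasDerivAt_hFun {t : ℝ} (h₁ : t ≠ 1) (h₂ : t ≠ -1) : HasDerivAt hFun (hFun' t) t := by
  have hφ {u : ℝ → ℝ} {u' : ℝ} (hu : HasDerivAt u u' t) (hu₀ : u t ≠ 0) :
      HasDerivAt (fun x ↦ u x * log (u x)) ((log (u t) + 1) * u') t :=
    (hasDerivAt_mul_log hu₀).comp t hu
  have hsub : HasDerivAt (fun x ↦ (1 - x) ^ 2) (-2 * (1 - t)) t :=
    (((hasDerivAt_id' t).const_sub 1).fun_pow 2).congr_deriv (by ring)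
  have hadd : HasDerivAt (fun x ↦ (1 + x) ^ 2) (2 * (1 + t)) t :=
    (((hasDerivAt_id' t).const_add 1).fun_pow 2).congr_deriv (by ring)
  have hsq : HasDerivAt (fun x ↦ 1 + x ^ 2) (2 * t) t :=
    ((hasDerivAt_pow 2 t).const_add 1).congr_deriv (by ring)
  have hsub₀ : (1 - t) ^ 2 ≠ 0 := pow_ne_zero 2 (sub_ne_zero.mpr h₁.symm)
  have hadd₀ : (1 + t) ^ 2 ≠ 0 := pow_ne_zero 2 fun h ↦ h₂ (by linarith)
  have hsq₀ : 1 + t ^ 2 ≠ 0 := by positivity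
  have := (((hφ hsub hsub₀).const_mul (1 / 2)).fun_add ((hφ hadd hadd₀).const_mul (1 / 2))).fun_sub
    (hφ hsq hsq₀)
  refine (this.congr_deriv ?_).congr_of_eventuallyEq (.of_forall fun x ↦ ?_)
  · simp only [hFun', log_pow]
    push_cast
    ring
  · simp only [hFun]
    ring

lemma hFun'_nonneg {t : ℝ} (h₀ : 0 ≤ t) (h₁ : t < 1) : 0 ≤ hFun' t := by
  have hlog_sq_le : log (1 + t ^ 2) ≤ log (1 + t) := log_le_log (by positivity) (by nlinarith)
  have hlog_one_sub : log (1 - t) ≤ 0 := log_nonpos (by linarith) (by linarith)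
  have hlog_one_add : 0 ≤ log (1 + t) := log_nonneg (by linarith)
  unfold hFun'
  nlinarith [mul_le_mul_of_nonneg_left hlog_sq_le h₀,
    mul_nonpos_of_nonneg_of_nonpos (sub_nonneg.mpr h₁.le) hlog_one_sub]

lemma hFun'_sub_hFun (t : ℝ) :
    hFun' t - hFun t = (1 - t) * ((1 + t) * log (1 + t) - (3 - t) * log (1 - t)
      + (1 - t) * log (1 + t ^ 2)) := by
  rw [hFun_eq_mul_log, hFun']
  ring

lemma hFun_le_hFun' {t : ℝ} (h₀ : 0 ≤ t) (h₁ : t < 1) : hFun t ≤ hFun' t := by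
  have hlog_one_add : 0 ≤ log (1 + t) := log_nonneg (by linarith)
  have hlog_one_sub : log (1 - t) ≤ 0 := log_nonpos (by linarith) (by linarith)
  have hlog_sq : 0 ≤ log (1 + t ^ 2) := log_nonneg (by nlinarith)
  rw [← sub_nonneg, hFun'_sub_hFun]
  refine mul_nonneg (by linarith) (add_nonneg (sub_nonneg_of_le ?_) ?_)
  · exact (mul_nonpos_of_nonneg_of_nonpos (by linarith) hlog_one_sub).trans
      (mul_nonneg (by linarith) hlog_one_add)
  · exact mul_nonneg (by linarith) hlog_sq

lemma monotoneOn_hFun : MonotoneOn hFun (Set.Ico 0 1) := by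
  have hderiv {x : ℝ} (hx : x ∈ Set.Ico (0 : ℝ) 1) : HasDerivAt hFun (hFun' x) x :=
    hasDerivAt_hFun hx.2.ne (by linarith [hx.1])
  refine monotoneOn_of_hasDerivWithinAt_nonneg (convex_Ico 0 1)
    (fun x hx ↦ (hderiv hx).continuousAt.continuousWithinAt)
    (fun x hx ↦ (hderiv (interior_subset hx)).hasDerivWithinAt) ?_
  rw [interior_Ico]
  exact fun x hx ↦ hFun'_nonneg hx.1.le hx.2

lemma hFun_nonneg {t : ℝ} (h₀ : 0 ≤ t) (h₁ : t < 1) : 0 ≤ hFun t := by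
  have hzero : hFun 0 = 0 := by simp [hFun]
  simpa [hzero] using monotoneOn_hFun ⟨le_rfl, one_pos⟩ ⟨h₀, h₁⟩ h₀

/-- For every `t ∈ [0,1)`, `h'(t) ≥ h(t) ≥ 0`. -/
theorem hFun'_ge_hFun_ge_zero :
    ∀ t ∈ Set.Ico (0 : ℝ) 1, hFun' t ≥ hFun t ∧ hFun t ≥ 0 :=
  fun _ ht ↦ ⟨hFun_le_hFun' ht.1 ht.2, hFun_nonneg ht.1 ht.2⟩
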